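/- arXiv:2512.06984 — 2 statements merged into one kernel-verified Lean document; each statement's English description precedes it below -/
import Mathlib

section
/- Let scl = (scl_α)_{α>0} be a scaling and μ a Borel measure on a separable metric space (X,d). Then for every α > 0 the level sets E̲_μ(α) = {x ∈ X : underline-scl_loc μ(x) = α}, Ē_μ(α) = {x ∈ X : overline-scl_loc μ(x) = α}, and E_μ(α) = E̲_μ(α) ∩ Ē_μ(α) are Borel subsets of X. -/
open scoped ENNReal NNReal Topology
open Filter MeasureTheory Metric Set

noncomputable section

namespace Multifractal


/-- A Hausdorff (gauge) function: continuous, non-decreasing on `[0,∞)`,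
vanishing at `0` and positive on `(0,∞)`. -/
structure IsHausdorffFunction (h : ℝ → ℝ) : Prop where
  continuousOn : ContinuousOn h (Set.Ici 0)
  monotoneOn : MonotoneOn h (Set.Ici 0)
  map_zero : h 0 = 0
  pos : ∀ t : ℝ, 0 < t → 0 < h t

variable {X : Type*} [MetricSpace X]

/-- The `δ`-level Hausdorff pre-measure `H^h_δ` associated to a gauge `h`:
infimum of `∑ h(r_j)` over countable covers by balls of radii at most `δ`. -/
def hMeasAux (h : ℝ → ℝ) (δ : ℝ≥0∞) (E : Set X) : ℝ≥0∞ :=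
  ⨅ (c : ℕ → X) (r : ℕ → ℝ) (_ : ∀ n, 0 < r n ∧ ENNReal.ofReal (r n) ≤ δ)
    (_ : E ⊆ ⋃ n, Metric.ball (c n) (r n)), ∑' n, ENNReal.ofReal (h (r n))

/-- The `h`-Hausdorff measure `H^h(E) = lim_{δ → 0} H^h_δ(E) = sup_{δ > 0} H^h_δ(E)`. -/
def hMeas (h : ℝ → ℝ) (E : Set X) : ℝ≥0∞ :=
  ⨆ (δ : ℝ≥0∞) (_ : 0 < δ), hMeasAux h δ E

/-- The gauge `h` satisfies the increasing sets lemma on `X`: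
for every increasing sequence of sets and every `0 < δ < η`,
`H^h_η(⋃ n, E n) ≤ sup_n H^h_δ(E n)`. -/
def IncreasingSetsLemma (h : ℝ → ℝ) (X : Type*) [MetricSpace X] : Prop :=
  ∀ E : ℕ → Set X, Monotone E → ∀ δ η : ℝ, 0 < δ → δ < η →
    hMeasAux h (ENNReal.ofReal η) (⋃ n, E n) ≤ ⨆ n, hMeasAux h (ENNReal.ofReal δ) (E n)

/-- A scaling: a family of Hausdorff functions indexed by `α > 0`, such that for
`α > β > 0` and all `λ > 1` close enough to `1`, `scl_α(ε) = o(scl_β(ε^λ))` and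
`scl_α(ε) = o(scl_β(ε)^λ)` as `ε → 0⁺`. -/
structure IsScaling (scl : ℝ → ℝ → ℝ) : Prop where
  hausdorff : ∀ α : ℝ, 0 < α → IsHausdorffFunction (scl α)
  littleO : ∀ α β : ℝ, 0 < β → β < α → ∃ lam₀ : ℝ, 1 < lam₀ ∧
    ∀ lam : ℝ, 1 < lam → lam < lam₀ →
      (fun ε => scl α ε) =o[𝓝[>] (0:ℝ)] (fun ε => scl β (ε ^ lam)) ∧
      (fun ε => scl α ε) =o[𝓝[>] (0:ℝ)] (fun ε => (scl β ε) ^ lam)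

/-- The Hausdorff scale of a set: `sup {α > 0 : H^{scl_α}(A) = ∞}` (as an `ℝ≥0∞`,
with value `0` for the empty supremum). -/
def sclH (scl : ℝ → ℝ → ℝ) (A : Set X) : ℝ≥0∞ :=
  ⨆ (α : ℝ) (_ : 0 < α ∧ hMeas (scl α) A = ∞), ENNReal.ofReal α

variable [MeasurableSpace X]

/-- The lower local scale of a measure `μ` at `x`:
`sup {α > 0 : μ(B(x,ε))/scl_α(ε) → 0 as ε → 0⁺}`. -/
def lowerLocScale (scl : ℝ → ℝ → ℝ) (μ : Measure X) (x : X) : ℝ≥0∞ :=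
  ⨆ (α : ℝ) (_ : 0 < α ∧ Tendsto (fun ε : ℝ => μ (Metric.ball x ε) / ENNReal.ofReal (scl α ε))
      (𝓝[>] (0:ℝ)) (𝓝 0)), ENNReal.ofReal α

/-- The upper local scale of a measure `μ` at `x`:
`inf {α > 0 : μ(B(x,ε))/scl_α(ε) → ∞ as ε → 0⁺}`. -/
def upperLocScale (scl : ℝ → ℝ → ℝ) (μ : Measure X) (x : X) : ℝ≥0∞ :=
  ⨅ (α : ℝ) (_ : 0 < α ∧ Tendsto (fun ε : ℝ => μ (Metric.ball x ε) / ENNReal.ofReal (scl α ε))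
      (𝓝[>] (0:ℝ)) (𝓝 ⊤)), ENNReal.ofReal α

/-- The (lower) Hausdorff scale of a measure: `inf {scl_H E : E Borel, ν(E) > 0}`. -/
def sclHMeas (scl : ℝ → ℝ → ℝ) (ν : Measure X) : ℝ≥0∞ :=
  ⨅ (E : Set X) (_ : MeasurableSet E ∧ 0 < ν E), sclH scl E

/-- The upper Hausdorff scale of a measure: `inf {scl_H E : E Borel, ν(E) = 1}`. -/
def sclHStarMeas (scl : ℝ → ℝ → ℝ) (ν : Measure X) : ℝ≥0∞ :=
  ⨅ (E : Set X) (_ : MeasurableSet E ∧ ν E = 1), sclH scl E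

/-- `M¹(A)`: Borel probability measures supported on `A`. -/
def probOn (A : Set X) : Set (Measure X) :=
  {μ : Measure X | IsProbabilityMeasure μ ∧ μ A = 1}



/-! ### Auxiliary lemmas for `levelSets_borel` -/

section Aux

lemma measurable_measure_ball' [MeasurableSpace X] [BorelSpace X] (μ : Measure X) (r : ℝ) :
    Measurable fun x : X => μ (Metric.ball x r) := by
  apply LowerSemicontinuous.measurable
  intro x c hc
  have hU : Metric.ball x r = ⋃ n : ℕ, Metric.ball x (r - 1/(n+1)) := by
    ext z
    simp only [Metric.mem_ball, Set.mem_iUnion]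
    constructor
    · intro h
      obtain ⟨n, hn⟩ := exists_nat_one_div_lt (sub_pos.2 h)
      exact ⟨n, by push_cast at hn ⊢; linarith⟩
    · rintro ⟨n, hn⟩
      have : (0:ℝ) < 1/(n+1) := by positivity
      linarith
  have hmono : Monotone fun n : ℕ => Metric.ball x (r - 1/(n+1)) := by
    intro m n hmn
    apply Metric.ball_subset_ball
    have h1 : (1:ℝ)/(n+1) ≤ 1/(m+1) := by
      apply one_div_le_one_div_of_le (by positivity)
      exact_mod_cast Nat.succ_le_succ hmn
    linarith
  simp only [] at hc
  rw [hU, hmono.measure_iUnion] at hc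
  obtain ⟨n, hn⟩ := lt_iSup_iff.1 hc
  filter_upwards [Metric.ball_mem_nhds x (show (0:ℝ) < 1/(n+1) by positivity)] with y hy
  refine hn.trans_le (measure_mono ?_)
  intro z hz
  simp only [Metric.mem_ball] at *
  calc dist z y ≤ dist z x + dist x y := dist_triangle z x y
    _ < (r - 1/(n+1)) + 1/(n+1) := by rw [dist_comm x y]; exact add_lt_add hz hy
    _ = r := by ring

lemma scl_le_eventually {scl : ℝ → ℝ → ℝ} (hscl : IsScaling scl) {α β : ℝ}
    (hβ : 0 < β) (hβα : β < α) :
    ∀ᶠ ε in 𝓝[>] (0:ℝ), scl α ε ≤ scl β ε := by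
  obtain ⟨lam₀, hlam₀, h⟩ := hscl.littleO α β hβ hβα
  have h1 : 1 < (1 + lam₀)/2 := by linarith
  have h2 : (1 + lam₀)/2 < lam₀ := by linarith
  obtain ⟨-, ho⟩ := h _ h1 h2
  have hb := hscl.hausdorff β hβ
  have hcont : Tendsto (scl β) (𝓝[>] (0:ℝ)) (𝓝 0) := by
    have := (hb.continuousOn 0 Set.self_mem_Ici).tendsto
    rw [hb.map_zero] at this
    exact this.mono_left (nhdsWithin_mono _ Set.Ioi_subset_Ici_self)
  have hsmall : ∀ᶠ ε in 𝓝[>] (0:ℝ), scl β ε ≤ 1 := by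
    filter_upwards [hcont.eventually (eventually_le_nhds one_pos)] with ε hε using hε
  have hpos : ∀ᶠ ε in 𝓝[>] (0:ℝ), 0 < scl β ε := by
    filter_upwards [self_mem_nhdsWithin] with ε hε using hb.pos ε hε
  filter_upwards [ho.bound one_pos, hsmall, hpos] with ε hbd hle hp
  have hrp : (scl β ε) ^ ((1 + lam₀)/2) ≤ scl β ε := by
    have := Real.rpow_le_rpow_of_exponent_ge hp hle (le_of_lt h1)
    rwa [Real.rpow_one] at this
  calc scl α ε ≤ |scl α ε| := le_abs_self _
    _ ≤ 1 * |(scl β ε) ^ ((1 + lam₀)/2)| := by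
        simpa [Real.norm_eq_abs] using hbd
    _ = (scl β ε) ^ ((1 + lam₀)/2) := by
        rw [one_mul, abs_of_pos (Real.rpow_pos_of_pos hp _)]
    _ ≤ scl β ε := hrp

lemma exists_rat_seq_above {a b : ℝ} (hab : a < b) :
    ∃ u : ℕ → ℚ, (∀ n, a < (u n:ℝ) ∧ (u n:ℝ) < b) ∧
      Tendsto (fun n => (u n:ℝ)) atTop (𝓝 a) := by
  have hsel : ∀ n : ℕ, ∃ q : ℚ, a < (q:ℝ) ∧ (q:ℝ) < min b (a + (b-a)/(n+1)) := by
    intro n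
    apply exists_rat_btwn
    apply lt_min hab
    have hba : (0:ℝ) < b - a := by linarith
    have : 0 < (b-a)/((n:ℝ)+1) := by positivity
    linarith
  choose u hu1 hu2 using hsel
  refine ⟨u, fun n => ⟨hu1 n, (hu2 n).trans_le (min_le_left _ _)⟩, ?_⟩
  have h0 : Tendsto (fun n : ℕ => (b-a)/((n:ℝ)+1)) atTop (𝓝 0) := by
    simpa [mul_one_div, div_eq_mul_inv] using tendsto_one_div_add_atTop_nhds_zero_nat.const_mul (b-a)
  have hupper : Tendsto (fun n : ℕ => a + (b-a)/((n:ℝ)+1)) atTop (𝓝 a) := by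
    simpa using tendsto_const_nhds.add h0
  exact tendsto_of_tendsto_of_tendsto_of_le_of_le tendsto_const_nhds hupper
    (fun n => (hu1 n).le) (fun n => ((hu2 n).trans_le (min_le_right _ _)).le)

lemma exists_rat_seq_below {a b : ℝ} (hab : a < b) :
    ∃ u : ℕ → ℚ, (∀ n, a < (u n:ℝ) ∧ (u n:ℝ) < b) ∧
      Tendsto (fun n => (u n:ℝ)) atTop (𝓝 b) := by
  obtain ⟨u, hu, ht⟩ := exists_rat_seq_above (neg_lt_neg hab)
  refine ⟨fun n => -u n, fun n => ?_, ?_⟩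
  · have := hu n
    push_cast
    constructor <;> [linarith [(this).2]; linarith [(this).1]]
  · have : Tendsto (fun n => -((u n : ℝ))) atTop (𝓝 (-(-b))) := ht.neg
    simpa using this

variable [MeasurableSpace X]

lemma tendsto_zero_iff_rat (μ : Measure X) {h : ℝ → ℝ}
    (hcont : ContinuousOn h (Set.Ici 0)) (hpos : ∀ t : ℝ, 0 < t → 0 < h t) (x : X) :
    Tendsto (fun ε : ℝ => μ (Metric.ball x ε) / ENNReal.ofReal (h ε)) (𝓝[>] (0:ℝ)) (𝓝 0) ↔
    ∀ k : ℕ, ∃ δ : ℚ, 0 < (δ:ℝ) ∧ ∀ q : ℚ, 0 < (q:ℝ) → (q:ℝ) < (δ:ℝ) →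
      μ (Metric.ball x (q:ℝ)) ≤ ENNReal.ofReal (h (q:ℝ)) / (k+1) := by
  constructor
  · intro hT k
    have hk : (0:ℝ≥0∞) < ((k:ℝ≥0∞)+1)⁻¹ := by
      simp [ENNReal.inv_pos]
    have hev := ENNReal.tendsto_nhds_zero.1 hT _ hk
    obtain ⟨u, hu, hsub⟩ := mem_nhdsGT_iff_exists_Ioo_subset.1 hev
    obtain ⟨δ, hδ1, hδ2⟩ := exists_rat_btwn (Set.mem_Ioi.1 hu)
    refine ⟨δ, hδ1, fun q hq1 hq2 => ?_⟩
    have hmem : (q:ℝ) ∈ Set.Ioo (0:ℝ) u := ⟨hq1, by linarith⟩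
    have hb := hsub hmem
    simp only [Set.mem_setOf_eq] at hb
    have hs0 : ENNReal.ofReal (h (q:ℝ)) ≠ 0 := by
      simp [ENNReal.ofReal_eq_zero, not_le, hpos _ hq1]
    have hst : ENNReal.ofReal (h (q:ℝ)) ≠ ∞ := ENNReal.ofReal_ne_top
    rw [ENNReal.div_le_iff_le_mul (Or.inl hs0) (Or.inl hst)] at hb
    rw [ENNReal.div_eq_inv_mul]
    exact hb
  · intro H
    rw [ENNReal.tendsto_nhds_zero]
    intro a ha
    obtain ⟨k, hk⟩ := ENNReal.exists_inv_nat_lt ha.ne'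
    obtain ⟨δ, hδpos, hδ⟩ := H k
    have key : ∀ ε : ℝ, 0 < ε → ε < (δ:ℝ) →
        μ (Metric.ball x ε) ≤ ENNReal.ofReal (h ε) / (k+1) := by
      intro ε hε0 hεδ
      obtain ⟨u, hu, hut⟩ := exists_rat_seq_above hεδ
      have hmono : ∀ n, μ (Metric.ball x ε) ≤ μ (Metric.ball x ((u n : ℝ))) :=
        fun n => measure_mono (Metric.ball_subset_ball (hu n).1.le)
      have hbound : ∀ n, μ (Metric.ball x ε) ≤ ENNReal.ofReal (h ((u n:ℝ))) / (k+1) :=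
        fun n => (hmono n).trans (hδ (u n) (hε0.trans (hu n).1) (hu n).2)
      have hth : Tendsto (fun n => h ((u n : ℝ))) atTop (𝓝 (h ε)) := by
        have hc := (hcont ε hε0.le).tendsto
        refine hc.comp (tendsto_nhdsWithin_of_tendsto_nhds_of_eventually_within _ hut ?_)
        exact Eventually.of_forall fun n => (hε0.trans (hu n).1).le
      have htt : Tendsto (fun n => ENNReal.ofReal (h ((u n:ℝ))) / (k+1)) atTop
          (𝓝 (ENNReal.ofReal (h ε) / (k+1))) := by
        simp only [div_eq_mul_inv]
        exact ENNReal.Tendsto.mul_const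
          (ENNReal.continuous_ofReal.continuousAt.tendsto.comp hth)
          (Or.inr (by simp))
      exact ge_of_tendsto' htt hbound
    have hev : ∀ᶠ ε in 𝓝[>] (0:ℝ),
        μ (Metric.ball x ε) / ENNReal.ofReal (h ε) ≤ ((k:ℝ≥0∞))⁻¹ := by
      filter_upwards [Ioo_mem_nhdsGT_of_mem (Set.mem_Ico.2 ⟨le_refl 0, hδpos⟩)] with ε hε
      obtain ⟨hε0, hεδ⟩ := hε
      have hkey := key ε hε0 hεδ
      have hs0 : ENNReal.ofReal (h ε) ≠ 0 := by
        simp [ENNReal.ofReal_eq_zero, not_le, hpos _ hε0]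
      have hst : ENNReal.ofReal (h ε) ≠ ∞ := ENNReal.ofReal_ne_top
      have h1 : μ (Metric.ball x ε) / ENNReal.ofReal (h ε) ≤ ((k:ℝ≥0∞)+1)⁻¹ := by
        rw [ENNReal.div_le_iff_le_mul (Or.inl hs0) (Or.inl hst)]
        rw [ENNReal.div_eq_inv_mul] at hkey
        exact hkey
      refine h1.trans (ENNReal.inv_le_inv.2 ?_)
      exact le_add_right le_rfl
    filter_upwards [hev] with ε hε using hε.trans hk.le

lemma tendsto_top_iff_rat (μ : Measure X) {h : ℝ → ℝ}
    (hcont : ContinuousOn h (Set.Ici 0)) (hpos : ∀ t : ℝ, 0 < t → 0 < h t) (x : X) :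
    Tendsto (fun ε : ℝ => μ (Metric.ball x ε) / ENNReal.ofReal (h ε)) (𝓝[>] (0:ℝ)) (𝓝 ⊤) ↔
    ∀ k : ℕ, ∃ δ : ℚ, 0 < (δ:ℝ) ∧ ∀ q : ℚ, 0 < (q:ℝ) → (q:ℝ) < (δ:ℝ) →
      (k:ℝ≥0∞) * ENNReal.ofReal (h (q:ℝ)) ≤ μ (Metric.ball x (q:ℝ)) := by
  constructor
  · intro hT k
    have hev := ENNReal.tendsto_nhds_top_iff_nat.1 hT k
    obtain ⟨u, hu, hsub⟩ := mem_nhdsGT_iff_exists_Ioo_subset.1 hev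
    obtain ⟨δ, hδ1, hδ2⟩ := exists_rat_btwn (Set.mem_Ioi.1 hu)
    refine ⟨δ, hδ1, fun q hq1 hq2 => ?_⟩
    have hb := hsub (⟨hq1, by linarith⟩ : (q:ℝ) ∈ Set.Ioo (0:ℝ) u)
    simp only [Set.mem_setOf_eq] at hb
    have hs0 : ENNReal.ofReal (h (q:ℝ)) ≠ 0 := by
      simp [ENNReal.ofReal_eq_zero, not_le, hpos _ hq1]
    have hst : ENNReal.ofReal (h (q:ℝ)) ≠ ∞ := ENNReal.ofReal_ne_top
    rw [← ENNReal.le_div_iff_mul_le (Or.inl hs0) (Or.inl hst)]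
    exact hb.le
  · intro H
    rw [ENNReal.tendsto_nhds_top_iff_nat]
    intro k
    obtain ⟨δ, hδpos, hδ⟩ := H (k+1)
    have key : ∀ ε : ℝ, 0 < ε → ε < (δ:ℝ) →
        ((k:ℝ≥0∞)+1) * ENNReal.ofReal (h ε) ≤ μ (Metric.ball x ε) := by
      intro ε hε0 hεδ
      obtain ⟨u, hu, hut⟩ := exists_rat_seq_below hε0
      have hbound : ∀ n, ((k:ℝ≥0∞)+1) * ENNReal.ofReal (h ((u n:ℝ))) ≤ μ (Metric.ball x ε) := by
        intro n
        have h1 := hδ (u n) (hu n).1 ((hu n).2.trans hεδ)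
        have h2 : μ (Metric.ball x ((u n:ℝ))) ≤ μ (Metric.ball x ε) :=
          measure_mono (Metric.ball_subset_ball (hu n).2.le)
        refine le_trans ?_ (h1.trans h2)
        push_cast
        exact le_refl _
      have hth : Tendsto (fun n => h ((u n : ℝ))) atTop (𝓝 (h ε)) := by
        have hc := (hcont ε hε0.le).tendsto
        refine hc.comp (tendsto_nhdsWithin_of_tendsto_nhds_of_eventually_within _ hut ?_)
        exact Eventually.of_forall fun n => (hu n).1.le
      have htt : Tendsto (fun n => ((k:ℝ≥0∞)+1) * ENNReal.ofReal (h ((u n:ℝ)))) atTop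
          (𝓝 (((k:ℝ≥0∞)+1) * ENNReal.ofReal (h ε))) :=
        ENNReal.Tendsto.const_mul
          (ENNReal.continuous_ofReal.continuousAt.tendsto.comp hth)
          (Or.inr (by simp))
      exact le_of_tendsto' htt hbound
    filter_upwards [Ioo_mem_nhdsGT_of_mem (Set.mem_Ico.2 ⟨le_refl 0, hδpos⟩)] with ε hε
    obtain ⟨hε0, hεδ⟩ := hε
    have hs0 : ENNReal.ofReal (h ε) ≠ 0 := by
      simp [ENNReal.ofReal_eq_zero, not_le, hpos _ hε0]
    have hst : ENNReal.ofReal (h ε) ≠ ∞ := ENNReal.ofReal_ne_top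
    have h1 : ((k:ℝ≥0∞)+1) ≤ μ (Metric.ball x ε) / ENNReal.ofReal (h ε) := by
      rw [ENNReal.le_div_iff_mul_le (Or.inl hs0) (Or.inl hst)]
      exact key ε hε0 hεδ
    exact lt_of_lt_of_le (ENNReal.lt_add_right (by simp) one_ne_zero) h1

/-- The "lower" tendsto-to-zero predicate. -/
def TZero (scl : ℝ → ℝ → ℝ) (μ : Measure X) (q : ℝ) (x : X) : Prop :=
  Tendsto (fun ε : ℝ => μ (Metric.ball x ε) / ENNReal.ofReal (scl q ε)) (𝓝[>] (0:ℝ)) (𝓝 0)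

/-- The "upper" tendsto-to-top predicate. -/
def TTop (scl : ℝ → ℝ → ℝ) (μ : Measure X) (q : ℝ) (x : X) : Prop :=
  Tendsto (fun ε : ℝ => μ (Metric.ball x ε) / ENNReal.ofReal (scl q ε)) (𝓝[>] (0:ℝ)) (𝓝 ⊤)

lemma TZero_mono {scl : ℝ → ℝ → ℝ} (hscl : IsScaling scl) (μ : Measure X) {β γ : ℝ}
    (hβ : 0 < β) (hβγ : β < γ) {x : X} (hT : TZero scl μ γ x) : TZero scl μ β x := by
  have hev := scl_le_eventually hscl hβ hβγ
  refine tendsto_of_tendsto_of_tendsto_of_le_of_le' tendsto_const_nhds hT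
    (Eventually.of_forall fun _ => zero_le) ?_
  filter_upwards [hev] with ε h1
  exact ENNReal.div_le_div_left (ENNReal.ofReal_le_ofReal h1) _

lemma TTop_mono {scl : ℝ → ℝ → ℝ} (hscl : IsScaling scl) (μ : Measure X) {β γ : ℝ}
    (hβ : 0 < β) (hβγ : β < γ) {x : X} (hT : TTop scl μ β x) : TTop scl μ γ x := by
  have hev := scl_le_eventually hscl hβ hβγ
  have hle : (fun ε : ℝ => μ (Metric.ball x ε) / ENNReal.ofReal (scl β ε)) ≤ᶠ[𝓝[>] (0:ℝ)]
      (fun ε : ℝ => μ (Metric.ball x ε) / ENNReal.ofReal (scl γ ε)) := by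
    filter_upwards [hev] with ε h1
    exact ENNReal.div_le_div_left (ENNReal.ofReal_le_ofReal h1) _
  exact tendsto_nhds_top_mono hT hle

lemma lowerLocScale_eq_iff {scl : ℝ → ℝ → ℝ} (hscl : IsScaling scl) (μ : Measure X)
    {α : ℝ} (hα : 0 < α) (x : X) :
    lowerLocScale scl μ x = ENNReal.ofReal α ↔
      (∀ q : ℚ, 0 < (q:ℝ) → (q:ℝ) < α → TZero scl μ q x) ∧
      (∀ q : ℚ, α < (q:ℝ) → ¬ TZero scl μ q x) := by
  constructor
  · intro hL
    constructor
    · intro q hq0 hqα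
      by_contra hT
      have hub : lowerLocScale scl μ x ≤ ENNReal.ofReal (q:ℝ) := by
        refine iSup_le fun γ => iSup_le fun hγ => ?_
        obtain ⟨hγ0, hTγ⟩ := hγ
        apply ENNReal.ofReal_le_ofReal
        by_contra hlt
        push_neg at hlt
        exact hT (TZero_mono hscl μ hq0 hlt hTγ)
      rw [hL] at hub
      rw [ENNReal.ofReal_le_ofReal_iff hq0.le] at hub
      linarith
    · intro q hq hT
      have hq0 : 0 < (q:ℝ) := hα.trans hq
      have hge : ENNReal.ofReal (q:ℝ) ≤ lowerLocScale scl μ x :=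
        le_iSup_of_le (q:ℝ) (le_iSup_of_le ⟨hq0, hT⟩ le_rfl)
      rw [hL, ENNReal.ofReal_le_ofReal_iff hα.le] at hge
      linarith
  · rintro ⟨h1, h2⟩
    apply le_antisymm
    · refine iSup_le fun γ => iSup_le fun hγ => ?_
      obtain ⟨hγ0, hTγ⟩ := hγ
      apply ENNReal.ofReal_le_ofReal
      by_contra hlt
      push_neg at hlt
      obtain ⟨q, hq1, hq2⟩ := exists_rat_btwn hlt
      exact h2 q hq1 (TZero_mono hscl μ (hα.trans hq1) hq2 hTγ)
    · obtain ⟨u, hu, hut⟩ := exists_rat_seq_below hα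
      have hle : ∀ n, ENNReal.ofReal ((u n:ℝ)) ≤ lowerLocScale scl μ x := fun n =>
        le_iSup_of_le ((u n):ℝ)
          (le_iSup_of_le ⟨(hu n).1, h1 (u n) (hu n).1 (hu n).2⟩ le_rfl)
      have ht : Tendsto (fun n => ENNReal.ofReal ((u n:ℝ))) atTop
          (𝓝 (ENNReal.ofReal α)) :=
        (ENNReal.continuous_ofReal.continuousAt).tendsto.comp hut
      exact le_of_tendsto' ht hle

lemma upperLocScale_eq_iff {scl : ℝ → ℝ → ℝ} (hscl : IsScaling scl) (μ : Measure X)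
    {α : ℝ} (hα : 0 < α) (x : X) :
    upperLocScale scl μ x = ENNReal.ofReal α ↔
      (∀ q : ℚ, α < (q:ℝ) → TTop scl μ q x) ∧
      (∀ q : ℚ, 0 < (q:ℝ) → (q:ℝ) < α → ¬ TTop scl μ q x) := by
  constructor
  · intro hU
    constructor
    · intro q hq
      by_contra hS
      have hlb : ENNReal.ofReal (q:ℝ) ≤ upperLocScale scl μ x := by
        refine le_iInf fun γ => le_iInf fun hγ => ?_
        obtain ⟨hγ0, hSγ⟩ := hγ
        apply ENNReal.ofReal_le_ofReal
        by_contra hlt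
        push_neg at hlt
        exact hS (TTop_mono hscl μ hγ0 hlt hSγ)
      rw [hU, ENNReal.ofReal_le_ofReal_iff hα.le] at hlb
      linarith
    · intro q hq0 hqα hS
      have hub : upperLocScale scl μ x ≤ ENNReal.ofReal (q:ℝ) :=
        iInf_le_of_le (q:ℝ) (iInf_le_of_le ⟨hq0, hS⟩ le_rfl)
      rw [hU, ENNReal.ofReal_le_ofReal_iff hq0.le] at hub
      linarith
  · rintro ⟨h1, h2⟩
    apply le_antisymm
    · obtain ⟨u, hu, hut⟩ := exists_rat_seq_above (lt_add_one α)
      have hle : ∀ n, upperLocScale scl μ x ≤ ENNReal.ofReal ((u n:ℝ)) := fun n =>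
        iInf_le_of_le ((u n):ℝ)
          (iInf_le_of_le ⟨hα.trans (hu n).1, h1 (u n) (hu n).1⟩ le_rfl)
      have ht : Tendsto (fun n => ENNReal.ofReal ((u n:ℝ))) atTop
          (𝓝 (ENNReal.ofReal α)) :=
        (ENNReal.continuous_ofReal.continuousAt).tendsto.comp hut
      exact ge_of_tendsto' ht hle
    · refine le_iInf fun γ => le_iInf fun hγ => ?_
      obtain ⟨hγ0, hSγ⟩ := hγ
      apply ENNReal.ofReal_le_ofReal
      by_contra hlt
      push_neg at hlt
      obtain ⟨q, hq1, hq2⟩ := exists_rat_btwn hlt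
      exact h2 q (hγ0.trans hq1) hq2 (TTop_mono hscl μ hγ0 hq1 hSγ)

variable [BorelSpace X]

lemma measurableSet_TZero {scl : ℝ → ℝ → ℝ} (hscl : IsScaling scl) (μ : Measure X)
    {q : ℝ} (hq : 0 < q) : MeasurableSet {x : X | TZero scl μ q x} := by
  have hh := hscl.hausdorff q hq
  have hEq : {x : X | TZero scl μ q x} =
      ⋂ k : ℕ, ⋃ δ : ℚ, ⋃ _ : 0 < (δ:ℝ), ⋂ r : ℚ, ⋂ _ : 0 < (r:ℝ) ∧ (r:ℝ) < (δ:ℝ),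
        {x : X | μ (Metric.ball x (r:ℝ)) ≤ ENNReal.ofReal (scl q (r:ℝ)) / (k+1)} := by
    ext x
    simp only [Set.mem_setOf_eq, Set.mem_iInter, Set.mem_iUnion]
    rw [TZero, tendsto_zero_iff_rat μ hh.continuousOn hh.pos x]
    constructor
    · intro H k
      obtain ⟨δ, hδ, hδ'⟩ := H k
      exact ⟨δ, hδ, fun r hr => hδ' r hr.1 hr.2⟩
    · intro H k
      obtain ⟨δ, hδ, hδ'⟩ := H k
      exact ⟨δ, hδ, fun r h1 h2 => hδ' r ⟨h1, h2⟩⟩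
  rw [hEq]
  refine MeasurableSet.iInter fun k => MeasurableSet.iUnion fun δ =>
    MeasurableSet.iUnion fun _ => MeasurableSet.iInter fun r =>
    MeasurableSet.iInter fun _ => ?_
  exact measurableSet_le (measurable_measure_ball' μ _) measurable_const

lemma measurableSet_TTop {scl : ℝ → ℝ → ℝ} (hscl : IsScaling scl) (μ : Measure X)
    {q : ℝ} (hq : 0 < q) : MeasurableSet {x : X | TTop scl μ q x} := by
  have hh := hscl.hausdorff q hq
  have hEq : {x : X | TTop scl μ q x} =
      ⋂ k : ℕ, ⋃ δ : ℚ, ⋃ _ : 0 < (δ:ℝ), ⋂ r : ℚ, ⋂ _ : 0 < (r:ℝ) ∧ (r:ℝ) < (δ:ℝ),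
        {x : X | (k:ℝ≥0∞) * ENNReal.ofReal (scl q (r:ℝ)) ≤ μ (Metric.ball x (r:ℝ))} := by
    ext x
    simp only [Set.mem_setOf_eq, Set.mem_iInter, Set.mem_iUnion]
    rw [TTop, tendsto_top_iff_rat μ hh.continuousOn hh.pos x]
    constructor
    · intro H k
      obtain ⟨δ, hδ, hδ'⟩ := H k
      exact ⟨δ, hδ, fun r hr => hδ' r hr.1 hr.2⟩
    · intro H k
      obtain ⟨δ, hδ, hδ'⟩ := H k
      exact ⟨δ, hδ, fun r h1 h2 => hδ' r ⟨h1, h2⟩⟩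
  rw [hEq]
  refine MeasurableSet.iInter fun k => MeasurableSet.iUnion fun δ =>
    MeasurableSet.iUnion fun _ => MeasurableSet.iInter fun r =>
    MeasurableSet.iInter fun _ => ?_
  exact measurableSet_le measurable_const (measurable_measure_ball' μ _)

end Aux

/-- The level sets of the lower and upper local scales of a Borel measure are
Borel subsets of `X`. -/
theorem levelSets_borel {X : Type*} [MetricSpace X]
    [TopologicalSpace.SeparableSpace X] [MeasurableSpace X] [BorelSpace X]
    (scl : ℝ → ℝ → ℝ) (hscl : IsScaling scl)
    (μ : Measure X) (α : ℝ) (hα : 0 < α) :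
    MeasurableSet {x : X | lowerLocScale scl μ x = ENNReal.ofReal α} ∧
    MeasurableSet {x : X | upperLocScale scl μ x = ENNReal.ofReal α} ∧
    MeasurableSet ({x : X | lowerLocScale scl μ x = ENNReal.ofReal α} ∩
      {x : X | upperLocScale scl μ x = ENNReal.ofReal α}) := by
  have hLow : MeasurableSet {x : X | lowerLocScale scl μ x = ENNReal.ofReal α} := by
    have hEq : {x : X | lowerLocScale scl μ x = ENNReal.ofReal α} =
        (⋂ q : ℚ, ⋂ _ : 0 < (q:ℝ) ∧ (q:ℝ) < α, {x : X | TZero scl μ (q:ℝ) x}) ∩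
        (⋂ q : ℚ, ⋂ _ : α < (q:ℝ), {x : X | TZero scl μ (q:ℝ) x}ᶜ) := by
      ext x
      simp only [Set.mem_setOf_eq, Set.mem_inter_iff, Set.mem_iInter, Set.mem_compl_iff]
      rw [lowerLocScale_eq_iff hscl μ hα x]
      constructor
      · rintro ⟨h1, h2⟩
        exact ⟨fun q hq => h1 q hq.1 hq.2, fun q hq => h2 q hq⟩
      · rintro ⟨h1, h2⟩
        exact ⟨fun q hq1 hq2 => h1 q ⟨hq1, hq2⟩, fun q hq => h2 q hq⟩
    rw [hEq]
    refine MeasurableSet.inter ?_ ?_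
    · refine MeasurableSet.iInter fun q => MeasurableSet.iInter fun hq => ?_
      exact measurableSet_TZero hscl μ hq.1
    · refine MeasurableSet.iInter fun q => MeasurableSet.iInter fun hq => ?_
      exact (measurableSet_TZero hscl μ (hα.trans hq)).compl
  have hUpp : MeasurableSet {x : X | upperLocScale scl μ x = ENNReal.ofReal α} := by
    have hEq : {x : X | upperLocScale scl μ x = ENNReal.ofReal α} =
        (⋂ q : ℚ, ⋂ _ : α < (q:ℝ), {x : X | TTop scl μ (q:ℝ) x}) ∩
        (⋂ q : ℚ, ⋂ _ : 0 < (q:ℝ) ∧ (q:ℝ) < α, {x : X | TTop scl μ (q:ℝ) x}ᶜ) := by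
      ext x
      simp only [Set.mem_setOf_eq, Set.mem_inter_iff, Set.mem_iInter, Set.mem_compl_iff]
      rw [upperLocScale_eq_iff hscl μ hα x]
      constructor
      · rintro ⟨h1, h2⟩
        exact ⟨fun q hq => h1 q hq, fun q hq => h2 q hq.1 hq.2⟩
      · rintro ⟨h1, h2⟩
        exact ⟨fun q hq => h1 q hq, fun q hq1 hq2 => h2 q ⟨hq1, hq2⟩⟩
    rw [hEq]
    refine MeasurableSet.inter ?_ ?_
    · refine MeasurableSet.iInter fun q => MeasurableSet.iInter fun hq => ?_
      exact measurableSet_TTop hscl μ (hα.trans hq)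
    · refine MeasurableSet.iInter fun q => MeasurableSet.iInter fun hq => ?_
      exact (measurableSet_TTop hscl μ hq.1).compl
  exact ⟨hLow, hUpp, hLow.inter hUpp⟩

end Multifractal
end
end

section
/- Let μ and ν be Borel measures on a separable metric space (X,d), let scl be a scaling, and let α > 0. If underline-scl_loc μ(x) = α for ν-almost every x, then scl_H {x ∈ X : underline-scl_loc μ(x) = α} ≥ scl_H* ν. -/
open scoped ENNReal NNReal Topology
open Filter MeasureTheory Metric Set

noncomputable section

namespace Multifractal


variable {X : Type*} [MetricSpace X]

variable [MeasurableSpace X]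

theorem hMeasAux_mono {X : Type*} [MetricSpace X] (h : ℝ → ℝ) (δ : ℝ≥0∞) {E A : Set X}
    (hEA : E ⊆ A) : hMeasAux h δ E ≤ hMeasAux h δ A := by
  refine iInf_mono fun c => iInf_mono fun r => iInf_mono fun hr => ?_
  exact le_iInf fun hA => iInf_le _ (hEA.trans hA)

theorem hMeas_mono {X : Type*} [MetricSpace X] (h : ℝ → ℝ) {E A : Set X}
    (hEA : E ⊆ A) : hMeas h E ≤ hMeas h A :=
  iSup_mono fun δ => iSup_mono fun _ => hMeasAux_mono h δ hEA

theorem sclH_mono {X : Type*} [MetricSpace X] (scl : ℝ → ℝ → ℝ) {E A : Set X}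
    (hEA : E ⊆ A) : sclH scl E ≤ sclH scl A := by
  refine iSup_le fun β => iSup_le fun hβ => ?_
  refine le_iSup_of_le β (le_iSup_of_le ⟨hβ.1, ?_⟩ le_rfl)
  exact top_le_iff.mp (hβ.2 ▸ hMeas_mono (scl β) hEA)

/-- **Weak mass distribution principle.** If `underline-scl_loc μ(x) = α` for
`ν`-almost every `x`, then the Hausdorff scale of the level set
`{x : underline-scl_loc μ(x) = α}` is at least `scl_H* ν`. -/
theorem weak_mass_distribution {X : Type*} [MetricSpace X]
    [TopologicalSpace.SeparableSpace X] [MeasurableSpace X] [BorelSpace X]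
    (μ ν : Measure X) (hν : IsProbabilityMeasure ν)
    (scl : ℝ → ℝ → ℝ) (hscl : IsScaling scl) (α : ℝ) (hα : 0 < α)
    (hae : ∀ᵐ x ∂ν, lowerLocScale scl μ x = ENNReal.ofReal α) :
    sclHStarMeas scl ν ≤ sclH scl {x : X | lowerLocScale scl μ x = ENNReal.ofReal α} := by
  set A := {x : X | lowerLocScale scl μ x = ENNReal.ofReal α}
  have h0 : ν Aᶜ = 0 := by
    rw [ae_iff] at hae
    simpa [A, Set.compl_setOf] using hae
  set N := toMeasurable ν Aᶜ with hN
  have hNmeas : MeasurableSet N := measurableSet_toMeasurable ν Aᶜ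
  have hNν : ν N = 0 := by rw [measure_toMeasurable]; exact h0
  have hE1 : ν Nᶜ = 1 := by
    rw [measure_compl hNmeas (ne_of_lt (measure_lt_top ν N)), hNν, measure_univ]
    simp
  have hsub : Nᶜ ⊆ A := by
    have : Aᶜ ⊆ N := subset_toMeasurable ν Aᶜ
    intro x hx
    by_contra h
    exact hx (this h)
  calc sclHStarMeas scl ν ≤ sclH scl Nᶜ :=
        iInf₂_le Nᶜ ⟨hNmeas.compl, hE1⟩
    _ ≤ sclH scl A := sclH_mono scl hsub

end Multifractal
end
end
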